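/- Let ρ₁ be a metric on a set Y, let φ : Y → [0, C] be a function, and define ρ₂(y, y') = inf over finite chains y = y₀, y₁, …, y_k = y' of Σᵢ ((φ(yᵢ) + φ(y_{i+1}))/2)·ρ₁(yᵢ, y_{i+1}). Then ρ₂ is a symmetric function satisfying the triangle inequality and ρ₂ ≤ C·ρ₁. Moreover, if y is a point with a ρ₁-ball B of radius r on which φ ≥ ε > 0, then ρ₂(y, y') ≥ (1/2)·ε·min(r, ρ₁(y, y')) for all y' ≠ y; in particular ρ₂(y, y') > 0. -/
import Mathlib


noncomputable section

/-- The set of weighted lengths of finite chains from `y` to `y'`: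
`Σᵢ ((φ(yᵢ) + φ(y_{i+1}))/2) · ρ₁(yᵢ, y_{i+1})` over chains `y = y₀, …, y_k = y'`. -/
def chainSums {Y : Type*} (ρ₁ : Y → Y → ℝ) (φ : Y → ℝ) (y y' : Y) : Set ℝ :=
  {s | ∃ (k : ℕ) (c : ℕ → Y), c 0 = y ∧ c k = y' ∧
    s = ∑ i ∈ Finset.range k, ((φ (c i) + φ (c (i + 1))) / 2) * ρ₁ (c i) (c (i + 1))}

/-- The weighted chain pseudometric `ρ₂` induced by the metric `ρ₁` and weight `φ`. -/
def rho2 {Y : Type*} (ρ₁ : Y → Y → ℝ) (φ : Y → ℝ) (y y' : Y) : ℝ :=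
  sInf (chainSums ρ₁ φ y y')

section Aux

variable {Y : Type*} (ρ₁ : Y → Y → ℝ)

lemma rho1_nonneg (h0 : ∀ y y', ρ₁ y y' = 0 ↔ y = y') (hsymm : ∀ y y', ρ₁ y y' = ρ₁ y' y)
    (htri : ∀ x y z, ρ₁ x z ≤ ρ₁ x y + ρ₁ y z) (y y' : Y) : 0 ≤ ρ₁ y y' := by
  have h := htri y y' y
  rw [(h0 y y).mpr rfl, hsymm y' y] at h
  linarith

lemma chainSums_nonempty (φ : Y → ℝ) (y y' : Y) : (chainSums ρ₁ φ y y').Nonempty := by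
  refine ⟨((φ y + φ y') / 2) * ρ₁ y y', 1, fun i => if i = 0 then y else y', by simp, by simp, ?_⟩
  simp

lemma chainSums_mem_nonneg (hρ : ∀ y y', 0 ≤ ρ₁ y y') (φ : Y → ℝ) (hφ0 : ∀ y, 0 ≤ φ y)
    {y y' : Y} {s : ℝ} (hs : s ∈ chainSums ρ₁ φ y y') : 0 ≤ s := by
  obtain ⟨k, c, -, -, rfl⟩ := hs
  refine Finset.sum_nonneg fun i _ => mul_nonneg (by have := hφ0 (c i); have := hφ0 (c (i+1)); positivity) (hρ _ _)

lemma chainSums_bddBelow (hρ : ∀ y y', 0 ≤ ρ₁ y y') (φ : Y → ℝ) (hφ0 : ∀ y, 0 ≤ φ y)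
    (y y' : Y) : BddBelow (chainSums ρ₁ φ y y') :=
  ⟨0, fun s hs => chainSums_mem_nonneg ρ₁ hρ φ hφ0 hs⟩

lemma chainSums_symm_subset (hsymm : ∀ y y', ρ₁ y y' = ρ₁ y' y) (φ : Y → ℝ) (y y' : Y) :
    chainSums ρ₁ φ y y' ⊆ chainSums ρ₁ φ y' y := by
  rintro s ⟨k, c, hc0, hck, rfl⟩
  refine ⟨k, fun i => c (k - i), by simpa using hck, by simpa using hc0, ?_⟩
  rw [← Finset.sum_range_reflect
    (fun i => ((φ (c i) + φ (c (i + 1))) / 2) * ρ₁ (c i) (c (i + 1))) k]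
  refine Finset.sum_congr rfl fun i hi => ?_
  have hik : i < k := Finset.mem_range.mp hi
  beta_reduce
  rw [show k - i = (k - 1 - i) + 1 from by omega, show k - (i + 1) = k - 1 - i from by omega,
    hsymm]
  ring

/-- concatenation of chains -/
lemma chainSums_add_mem (φ : Y → ℝ) {x y z : Y} {a b : ℝ}
    (ha : a ∈ chainSums ρ₁ φ x y) (hb : b ∈ chainSums ρ₁ φ y z) :
    a + b ∈ chainSums ρ₁ φ x z := by
  obtain ⟨k, c, hc0, hck, rfl⟩ := ha
  obtain ⟨m, d, hd0, hdm, rfl⟩ := hb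
  refine ⟨k + m, fun i => if i < k then c i else d (i - k), ?_, ?_, ?_⟩
  · by_cases hk : 0 < k
    · simp [hk, hc0]
    · have hk0 : k = 0 := by omega
      simp [hk0, hd0, ← hc0, hk0 ▸ hck]
  · simp [hdm]
  · rw [Finset.sum_range_add]
    congr 1
    · refine Finset.sum_congr rfl fun i hi => ?_
      have hik : i < k := Finset.mem_range.mp hi
      by_cases h1 : i + 1 < k
      · simp [hik, h1]
      · have : i + 1 = k := by omega
        simp [hik, h1, this, hd0, ← hck]
    · refine Finset.sum_congr rfl fun i hi => ?_
      have h1 : ¬ (k + i < k) := by omega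
      have h2 : ¬ (k + i + 1 < k) := by omega
      have e1 : k + i - k = i := by omega
      have e2 : k + i + 1 - k = i + 1 := by omega
      simp [h1, h2, e1, e2]

lemma chain_length_lb (htri : ∀ x y z, ρ₁ x z ≤ ρ₁ x y + ρ₁ y z)
    (h0 : ∀ y y', ρ₁ y y' = 0 ↔ y = y') (c : ℕ → Y) :
    ∀ j, ρ₁ (c 0) (c j) ≤ ∑ i ∈ Finset.range j, ρ₁ (c i) (c (i + 1)) := by
  intro j
  induction j with
  | zero => simp [(h0 (c 0) (c 0)).mpr rfl]
  | succ n ih =>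
      rw [Finset.sum_range_succ]
      calc ρ₁ (c 0) (c (n + 1)) ≤ ρ₁ (c 0) (c n) + ρ₁ (c n) (c (n + 1)) := htri _ _ _
        _ ≤ _ := by linarith

end Aux

/-- For a metric `ρ₁` on `Y` and a weight `φ : Y → [0, C]`, the weighted
chain infimum `ρ₂` is symmetric, satisfies the triangle inequality and `ρ₂ ≤ C·ρ₁`; moreover
if `φ ≥ ε > 0` on a `ρ₁`-ball of radius `r` around `y`, then
`ρ₂(y, y') ≥ ½ ε min(r, ρ₁(y,y'))` for all `y' ≠ y`; in particular `ρ₂(y,y') > 0`. -/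
theorem stmt_13 {Y : Type*} (ρ₁ : Y → Y → ℝ)
    (h0 : ∀ y y', ρ₁ y y' = 0 ↔ y = y') (hsymm : ∀ y y', ρ₁ y y' = ρ₁ y' y)
    (htri : ∀ x y z, ρ₁ x z ≤ ρ₁ x y + ρ₁ y z)
    (C : ℝ) (hC : 0 ≤ C) (φ : Y → ℝ) (hφ0 : ∀ y, 0 ≤ φ y) (hφC : ∀ y, φ y ≤ C) :
    ((∀ y y', rho2 ρ₁ φ y y' = rho2 ρ₁ φ y' y) ∧
      (∀ x y z, rho2 ρ₁ φ x z ≤ rho2 ρ₁ φ x y + rho2 ρ₁ φ y z) ∧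
      (∀ y y', rho2 ρ₁ φ y y' ≤ C * ρ₁ y y')) ∧
    ∀ (y : Y) (r ε : ℝ), 0 < r → 0 < ε → (∀ z, ρ₁ y z < r → ε ≤ φ z) →
      ∀ y', y' ≠ y →
        (1 / 2) * ε * min r (ρ₁ y y') ≤ rho2 ρ₁ φ y y' ∧ 0 < rho2 ρ₁ φ y y' := by
  have hρ : ∀ y y', 0 ≤ ρ₁ y y' := rho1_nonneg ρ₁ h0 hsymm htri
  have hbdd := chainSums_bddBelow ρ₁ hρ φ hφ0
  have hne := chainSums_nonempty ρ₁ φ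
  constructor
  · refine ⟨?_, ?_, ?_⟩
    · intro y y'
      have h1 : chainSums ρ₁ φ y y' = chainSums ρ₁ φ y' y :=
        le_antisymm (chainSums_symm_subset ρ₁ hsymm φ y y')
          (chainSums_symm_subset ρ₁ hsymm φ y' y)
      rw [rho2, rho2, h1]
    · intro x y z
      have key : ∀ a ∈ chainSums ρ₁ φ x y, ∀ b ∈ chainSums ρ₁ φ y z,
          rho2 ρ₁ φ x z ≤ a + b := fun a ha b hb =>
        csInf_le (hbdd x z) (chainSums_add_mem ρ₁ φ ha hb)
      have h2 : ∀ a ∈ chainSums ρ₁ φ x y, rho2 ρ₁ φ x z - a ≤ rho2 ρ₁ φ y z := by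
        intro a ha
        refine le_csInf (hne y z) fun b hb => ?_
        linarith [key a ha b hb]
      have h3 : rho2 ρ₁ φ x z - rho2 ρ₁ φ y z ≤ rho2 ρ₁ φ x y := by
        refine le_csInf (hne x y) fun a ha => ?_
        linarith [h2 a ha]
      linarith
    · intro y y'
      have hmem : ((φ y + φ y') / 2) * ρ₁ y y' ∈ chainSums ρ₁ φ y y' := by
        refine ⟨1, fun i => if i = 0 then y else y', by simp, by simp, by simp⟩
      refine (csInf_le (hbdd y y') hmem).trans ?_
      have : (φ y + φ y') / 2 ≤ C := by
        have := hφC y; have := hφC y'; linarith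
      exact mul_le_mul_of_nonneg_right this (hρ y y')
  · intro y r ε hr hε hball y' hy'
    set D := min r (ρ₁ y y') with hD
    have hρpos : 0 < ρ₁ y y' := by
      rcases lt_or_eq_of_le (hρ y y') with h | h
      · exact h
      · exact absurd ((h0 y y').mp h.symm).symm hy'
    have hDpos : 0 < D := lt_min hr hρpos
    have hlb : (1 / 2) * ε * D ≤ rho2 ρ₁ φ y y' := by
      refine le_csInf (hne y y') fun s hs => ?_
      obtain ⟨k, c, hc0, hck, rfl⟩ := hs
      -- find the first index j with ρ₁ y (c j) ≥ D
      have hPk : D ≤ ρ₁ y (c k) := by rw [hck]; exact min_le_right _ _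
      have hex : ∃ j, D ≤ ρ₁ y (c j) := ⟨k, hPk⟩
      classical
      set j := Nat.find hex with hj
      have hjspec : D ≤ ρ₁ y (c j) := Nat.find_spec hex
      have hjk : j ≤ k := Nat.find_le hPk
      have hlt : ∀ i < j, ρ₁ y (c i) < D := fun i hi =>
        lt_of_not_ge (Nat.find_min hex hi)
      -- each term in the first j edges is ≥ (ε/2) ρ₁
      have hterm : ∀ i ∈ Finset.range j,
          (ε / 2) * ρ₁ (c i) (c (i + 1)) ≤
            ((φ (c i) + φ (c (i + 1))) / 2) * ρ₁ (c i) (c (i + 1)) := by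
        intro i hi
        have hij : i < j := Finset.mem_range.mp hi
        have hin : ρ₁ y (c i) < r := lt_of_lt_of_le (hlt i hij) (min_le_left _ _)
        have hφi : ε ≤ φ (c i) := hball _ hin
        have : ε / 2 ≤ (φ (c i) + φ (c (i + 1))) / 2 := by
          have := hφ0 (c (i + 1)); linarith
        exact mul_le_mul_of_nonneg_right this (hρ _ _)
      have hsum1 : (ε / 2) * ∑ i ∈ Finset.range j, ρ₁ (c i) (c (i + 1)) ≤
          ∑ i ∈ Finset.range j, ((φ (c i) + φ (c (i + 1))) / 2) * ρ₁ (c i) (c (i + 1)) := by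
        rw [Finset.mul_sum]
        exact Finset.sum_le_sum hterm
      have hchain : D ≤ ∑ i ∈ Finset.range j, ρ₁ (c i) (c (i + 1)) := by
        calc D ≤ ρ₁ y (c j) := hjspec
          _ = ρ₁ (c 0) (c j) := by rw [hc0]
          _ ≤ _ := chain_length_lb ρ₁ htri h0 c j
      have hmono : ∑ i ∈ Finset.range j, ((φ (c i) + φ (c (i + 1))) / 2) * ρ₁ (c i) (c (i + 1)) ≤
          ∑ i ∈ Finset.range k, ((φ (c i) + φ (c (i + 1))) / 2) * ρ₁ (c i) (c (i + 1)) := by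
        refine Finset.sum_le_sum_of_subset_of_nonneg
          (Finset.range_subset_range.mpr hjk) fun i _ _ => mul_nonneg (by have := hφ0 (c i); have := hφ0 (c (i+1)); positivity) (hρ _ _)
      have : (ε / 2) * D ≤ ∑ i ∈ Finset.range j, ρ₁ (c i) (c (i + 1)) * (ε / 2) := by
        rw [← Finset.sum_mul]
        exact mul_le_mul_of_nonneg_left hchain (by positivity) |>.trans_eq (mul_comm _ _)
      calc (1 / 2) * ε * D = (ε / 2) * D := by ring
        _ ≤ (ε / 2) * ∑ i ∈ Finset.range j, ρ₁ (c i) (c (i + 1)) :=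
            mul_le_mul_of_nonneg_left hchain (by positivity)
        _ ≤ _ := hsum1.trans hmono
    exact ⟨hlb, lt_of_lt_of_le (mul_pos (mul_pos (by norm_num) hε) hDpos) hlb⟩
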